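/- Record sampling representation of recall: if a random record i is drawn from D with probabilities p_i > 0, then pairwise recall R = 2·E[ f(c(i), 𝒞̂) / (|c(i)|·p_i) ] / E[ (|c(i)| − 1) / p_i ], provided the true clustering has at least one non-singleton cluster. -/

import Mathlib

open Finset

/-- The set of unordered pairs of distinct elements lying in a common block of `P`. -/
def clPairs {α : Type*} [DecidableEq α] (P : Finset (Finset α)) : Finset (Sym2 α) :=
  (P.sup fun c => c.sym2).filter (fun p => ¬ p.IsDiag)

/-- The block of the partition `P` containing `i`. -/
def partOf {α : Type*} [DecidableEq α] (P : Finset (Finset α)) (i : α) : Finset α :=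
  (P.filter (fun c => i ∈ c)).sup id

/-- `f(c, 𝒞̂) = Σ_{ĉ ∈ 𝒞̂} C(|c ∩ ĉ|, 2)`, real-valued. -/
noncomputable def ffun {α : Type*} [DecidableEq α] (Cp : Finset (Finset α)) (c : Finset α) : ℝ :=
  ∑ d ∈ Cp, ((c ∩ d).card.choose 2 : ℝ)

/-- `g(c, 𝒞̂) = f(c, 𝒞̂) / Σ_{ĉ ∈ 𝒞̂} C(|ĉ|, 2)`. -/
noncomputable def gfun {α : Type*} [DecidableEq α] (Cp : Finset (Finset α)) (c : Finset α) : ℝ :=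
  ffun Cp c / (∑ d ∈ Cp, (d.card.choose 2 : ℝ))

/-!
Every true cluster `c` contributes to `D` exactly `|c|` records, each carrying the same value of
`f(c, 𝒞̂) / |c|` and of `|c| - 1`, and the weights `p i` cancel against the importance factors
`1 / p i`. So the numerator sums `f(c, 𝒞̂) = #{true pairs of c that are predicted pairs}` over
all clusters, i.e. it is `|𝒯 ∩ 𝒫|`, and the denominator sums `|c| (|c| - 1) = 2 C(|c|, 2)`,
i.e. it is `2 |𝒯|`.
-/

theorem Set.PairwiseDisjoint.prod_inf {ι κ β : Type*} [SemilatticeInf β] [OrderBot β]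
    {s : Set ι} {t : Set κ} {f : ι → β} {g : κ → β}
    (hs : s.PairwiseDisjoint f) (ht : t.PairwiseDisjoint g) :
    (s ×ˢ t).PairwiseDisjoint fun x => f x.1 ⊓ g x.2 := by
  rintro ⟨i, j⟩ ⟨hi, hj⟩ ⟨i', j'⟩ ⟨hi', hj'⟩ hne
  obtain rfl | hii := eq_or_ne i i'
  · have hjj : j ≠ j' := fun h => hne (h ▸ rfl)
    exact (ht hj hj' hjj).mono inf_le_right inf_le_right
  · exact (hs hi hi' hii).mono inf_le_left inf_le_left

section

variable {α : Type*} [DecidableEq α]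

theorem Finset.sym2_inter (s t : Finset α) : (s ∩ t).sym2 = s.sym2 ∩ t.sym2 := by
  ext z
  simp only [mem_inter, mem_sym2_iff, ← forall₂_and]

theorem Finset.disjoint_sym2 {s t : Finset α} (h : Disjoint s t) :
    Disjoint s.sym2 t.sym2 := by
  rw [disjoint_iff_inter_eq_empty, ← sym2_inter, disjoint_iff_inter_eq_empty.1 h, sym2_empty]

theorem Finset.card_filter_not_isDiag_sym2 (s : Finset α) :
    #{z ∈ s.sym2 | ¬z.IsDiag} = (#s).choose 2 := by
  rw [sym2_eq_image, Sym2.filter_image_mk_not_isDiag, Sym2.card_image_offDiag]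

theorem Finset.card_filter_not_isDiag_sup_sym2 {ι : Type*} {I : Finset ι} {s : ι → Finset α}
    (hs : (I : Set ι).PairwiseDisjoint s) :
    #{z ∈ I.sup fun i => (s i).sym2 | ¬z.IsDiag} = ∑ i ∈ I, (#(s i)).choose 2 := by
  rw [sup_eq_biUnion, filter_biUnion, card_biUnion]
  · simp only [card_filter_not_isDiag_sym2]
  · exact fun i hi j hj hij => disjoint_filter_filter (disjoint_sym2 (hs hi hj hij))

theorem card_clPairs {P : Finset (Finset α)} (hP : (P : Set (Finset α)).PairwiseDisjoint id) :
    #(clPairs P) = ∑ c ∈ P, (#c).choose 2 :=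
  card_filter_not_isDiag_sup_sym2 hP

theorem clPairs_inter (P Q : Finset (Finset α)) :
    clPairs P ∩ clPairs Q = {z ∈ (P ×ˢ Q).sup fun x => (x.1 ∩ x.2).sym2 | ¬z.IsDiag} := by
  simp only [clPairs, ← filter_inter_distrib, sym2_inter]
  rw [← inf_eq_inter, sup_inf_sup]
  rfl

theorem card_clPairs_inter {P Q : Finset (Finset α)}
    (hP : (P : Set (Finset α)).PairwiseDisjoint id) (hQ : (Q : Set (Finset α)).PairwiseDisjoint id) :
    #(clPairs P ∩ clPairs Q) = ∑ c ∈ P, ∑ d ∈ Q, (#(c ∩ d)).choose 2 := by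
  rw [clPairs_inter, card_filter_not_isDiag_sup_sym2 (by rw [coe_product]; exact hP.prod_inf hQ),
    sum_product]

theorem Finpartition.partOf_parts {D : Finset α} (P : Finpartition D) (i : α) :
    partOf P.parts i = P.part i := by
  ext a
  simp only [partOf, mem_sup, mem_filter, id, P.mem_part_iff_exists]
  grind

theorem Finpartition.sum_apply_part {β : Type*} [AddCommMonoid β] {D : Finset α}
    (P : Finpartition D) (F : Finset α → β) :
    ∑ i ∈ D, F (P.part i) = ∑ c ∈ P.parts, #c • F c := by
  rw [← sum_fiberwise_of_maps_to' (t := P.parts) fun i hi => P.part_mem.2 hi]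
  refine sum_congr rfl fun c hc => ?_
  rw [sum_const, filter_congr fun i _ => P.part_eq_iff_mem hc, filter_mem_eq_inter,
    inter_eq_right.2 (P.le hc)]

end

theorem stmt4_general {α : Type*} [DecidableEq α] (D : Finset α) (C Cp : Finpartition D)
    (p : α → ℝ) (hp : ∀ i ∈ D, 0 < p i) :
    ((clPairs C.parts ∩ clPairs Cp.parts).card : ℝ) / (clPairs C.parts).card
      = 2 * (∑ i ∈ D, p i *
              (ffun Cp.parts (partOf C.parts i) / ((partOf C.parts i).card * p i)))
          / (∑ i ∈ D, p i * ((((partOf C.parts i).card : ℝ) - 1) / p i)) := by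
  have hC := C.supIndep.pairwiseDisjoint
  have hnum : ∑ i ∈ D, p i *
      (ffun Cp.parts (partOf C.parts i) / ((partOf C.parts i).card * p i))
      = ∑ c ∈ C.parts, ffun Cp.parts c := by
    calc _ = ∑ i ∈ D, ffun Cp.parts (C.part i) / #(C.part i) := sum_congr rfl fun i hi => by
            rw [C.partOf_parts, ← mul_div_assoc, mul_comm, mul_div_mul_right _ _ (hp i hi).ne']
      _ = _ := by
        rw [C.sum_apply_part fun c => ffun Cp.parts c / #c]
        refine sum_congr rfl fun c hc => ?_
        have hc0 : (#c : ℝ) ≠ 0 := by exact_mod_cast (C.nonempty_of_mem_parts hc).card_pos.ne'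
        rw [nsmul_eq_mul, mul_div_cancel₀ _ hc0]
  have hden : ∑ i ∈ D, p i * ((((partOf C.parts i).card : ℝ) - 1) / p i)
      = 2 * ∑ c ∈ C.parts, ((#c).choose 2 : ℝ) := by
    calc _ = ∑ i ∈ D, ((#(C.part i) : ℝ) - 1) := sum_congr rfl fun i hi => by
            rw [C.partOf_parts, mul_div_cancel₀ _ (hp i hi).ne']
      _ = _ := by
        rw [C.sum_apply_part fun c => (#c : ℝ) - 1, mul_sum]
        refine sum_congr rfl fun c _ => ?_
        rw [nsmul_eq_mul, Nat.cast_choose_two]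
        ring
  rw [hnum, hden, card_clPairs_inter hC Cp.supIndep.pairwiseDisjoint, card_clPairs hC,
    mul_div_mul_left _ _ two_ne_zero]
  push_cast [ffun]
  rfl

theorem stmt4 {α : Type*} [DecidableEq α] (D : Finset α) (C Cp : Finpartition D)
    (p : α → ℝ) (hp : ∀ i ∈ D, 0 < p i) (hsum : ∑ i ∈ D, p i = 1)
    (hT : (clPairs C.parts).Nonempty) :
    ((clPairs C.parts ∩ clPairs Cp.parts).card : ℝ) / (clPairs C.parts).card
      = 2 * (∑ i ∈ D, p i *
              (ffun Cp.parts (partOf C.parts i) / ((partOf C.parts i).card * p i)))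
          / (∑ i ∈ D, p i * ((((partOf C.parts i).card : ℝ) - 1) / p i)) :=
  stmt4_general D C Cp p hp
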